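/- arXiv:2204.09956 — 2 statements merged into one kernel-verified Lean document; each statement's English description precedes it below -/
import Mathlib

section
/- For every positive integer k, the infinite dihedral group contains exactly ⌊3k/2⌋ conjugacy classes of subgroups that are isomorphic to the infinite dihedral group and have index at most k. -/
open Pointwise

abbrev InfDihedral : Type := Monoid.Coprod (Multiplicative (ZMod 2)) (Multiplicative (ZMod 2))

/-!
Model `D∞` as `DihedralGroup 0 = ℤ ⋊ ℤ/2`, with rotations `r x` and reflections `sr x`.
A subgroup `H ≅ D∞` is non-abelian, so it contains a reflection `sr b`; its rotations form
some `nℤ`, hence `H = ⟨r n, sr b⟩ = {r x | n ∣ x} ∪ {sr x | n ∣ x - b}`, which has index `n`.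
Conjugation replaces `b` by `±b + 2c`, so for fixed `n` the conjugacy classes are indexed by
`b mod gcd(n, 2)`, and there are `∑_{n ≤ k} gcd(n, 2) = ⌊3k/2⌋` of them.
-/

open Multiplicative DihedralGroup

lemma Subgroup.index_eq_card_of_fibers {G X : Type*} [Group G] {H : Subgroup G} (f : G → X)
    (hf : Function.Surjective f) (hfH : ∀ x y, f x = f y ↔ x⁻¹ * y ∈ H) :
    H.index = Nat.card X := by
  rw [index_eq_card]
  exact Nat.card_congr ((Quotient.congrRight fun x y =>
    QuotientGroup.leftRel_apply.trans (hfH x y).symm).trans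
    (Setoid.quotientKerEquivOfSurjective f hf))

lemma Multiplicative.zmod_two_eq_one_or_eq_ofAdd_one (x : Multiplicative (ZMod 2)) :
    x = 1 ∨ x = ofAdd 1 := by
  revert x; decide

lemma Multiplicative.zmod_two_mul_self (x : Multiplicative (ZMod 2)) : x * x = 1 := by
  revert x; decide

section Involution

variable {G : Type*} [Group G]

def involutionHom (g : G) (hg : g * g = 1) : Multiplicative (ZMod 2) →* G where
  toFun x := g ^ (toAdd x).val
  map_one' := pow_zero g
  map_mul' x y := by
    rcases x.zmod_two_eq_one_or_eq_ofAdd_one with rfl | rfl <;>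
      rcases y.zmod_two_eq_one_or_eq_ofAdd_one with rfl | rfl <;>
      simp [← ofAdd_add, show (1 + 1 : ZMod 2) = 0 from rfl, ZMod.val_one, hg]

@[simp]
lemma involutionHom_ofAdd_one (g : G) (hg : g * g = 1) : involutionHom g hg (ofAdd 1) = g :=
  pow_one g

lemma zpow_mul_of_involution {s t : G} (hs : s * s = 1) (hst : s * t * s = t⁻¹) (k : ℤ) :
    t ^ k * s = s * t ^ (-k) := by
  have hconj := map_zpow (MulAut.conj s) t k
  simp only [MulAut.conj_apply, inv_eq_of_mul_eq_one_right hs, hst, inv_zpow, ← zpow_neg]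
    at hconj
  rw [← hconj, ← mul_assoc, ← mul_assoc, hs, one_mul]

/-- `ZMod 0` is `ℤ` by definition, so `r i` and `sr i` are read as `t ^ i` and `s * t ^ i`. -/
def DihedralGroup.liftZero (s t : G) (hs : s * s = 1) (hst : s * t * s = t⁻¹) :
    DihedralGroup 0 →* G where
  toFun
    | r i => t ^ (show ℤ from i)
    | sr i => s * t ^ (show ℤ from i)
  map_one' := zpow_zero t
  map_mul' x y := by
    have hts := zpow_mul_of_involution hs hst
    rcases x with (i : ℤ) | (i : ℤ) <;> rcases y with (j : ℤ) | (j : ℤ)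
    · exact zpow_add t i j
    · show s * t ^ (j - i) = t ^ i * (s * t ^ j)
      rw [← mul_assoc, hts, mul_assoc, ← zpow_add, neg_add_eq_sub]
    · show s * t ^ (i + j) = s * t ^ i * t ^ j
      rw [mul_assoc, ← zpow_add]
    · show t ^ (j - i) = s * t ^ i * (s * t ^ j)
      rw [mul_assoc, ← mul_assoc (t ^ i), hts, mul_assoc, ← mul_assoc s, hs, one_mul, ← zpow_add,
        neg_add_eq_sub]

end Involution

namespace InfDihedral

open Monoid.Coprod

def toDihedralGroupZero : InfDihedral →* DihedralGroup 0 :=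
  lift (involutionHom (sr 0) (sr_mul_self 0)) (involutionHom (sr 1) (sr_mul_self 1))

noncomputable def mulEquivDihedralGroupZero : InfDihedral ≃* DihedralGroup 0 := by
  set s : InfDihedral := inl (ofAdd 1)
  set s' : InfDihedral := inr (ofAdd 1)
  have hs : s * s = 1 := by rw [← map_mul, zmod_two_mul_self, map_one]
  have hs' : s' * s' = 1 := by rw [← map_mul, zmod_two_mul_self, map_one]
  have hst : s * (s * s') * s = (s * s')⁻¹ := by
    rw [mul_inv_rev, ← mul_assoc, hs, one_mul, inv_eq_of_mul_eq_one_right hs,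
      inv_eq_of_mul_eq_one_right hs']
  refine MonoidHom.toMulEquiv toDihedralGroupZero (liftZero s (s * s') hs hst) ?_ ?_
  · refine hom_ext (MonoidHom.ext fun x => ?_) (MonoidHom.ext fun x => ?_) <;>
      rcases x.zmod_two_eq_one_or_eq_ofAdd_one with rfl | rfl
    · simp
    · show s * (s * s') ^ (0 : ℤ) = s
      rw [zpow_zero, mul_one]
    · simp
    · show s * (s * s') ^ (1 : ℤ) = s'
      rw [zpow_one, ← mul_assoc, hs, one_mul]
  · have h0 : toDihedralGroupZero s = sr 0 := by simp [toDihedralGroupZero, s]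
    have h1 : toDihedralGroupZero s' = sr 1 := by simp [toDihedralGroupZero, s']
    have ht : toDihedralGroupZero (s * s') = r 1 := by rw [map_mul, h0, h1, sr_mul_sr, sub_zero]
    refine MonoidHom.ext fun g => ?_
    rcases g with (i : ℤ) | (i : ℤ)
    · show toDihedralGroupZero ((s * s') ^ i) = (r i : DihedralGroup 0)
      rw [map_zpow, ht]
      exact r_one_zpow i
    · show toDihedralGroupZero (s * (s * s') ^ i) = (sr i : DihedralGroup 0)
      rw [map_mul, map_zpow, h0, ht, r_one_zpow, sr_mul_r, zero_add]
      rfl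

end InfDihedral

namespace DihedralGroup

section AffineSubgroup

variable {m : ℕ}

def affineHom (a b : ZMod m) : DihedralGroup m →* DihedralGroup m where
  toFun
    | r x => r (a * x)
    | sr x => sr (a * x + b)
  map_one' := congrArg r (mul_zero a)
  map_mul' x y := by
    rcases x with x | x <;> rcases y with y | y <;>
      simp only [r_mul_r, r_mul_sr, sr_mul_r, sr_mul_sr] <;> congr 1 <;> ring

/-- The subgroup `⟨r a, sr b⟩`. -/
def affineSubgroup (a b : ZMod m) : Subgroup (DihedralGroup m) := (affineHom a b).range

variable {a b : ZMod m}

lemma affineHom_injective (ha : IsLeftRegular a) : Function.Injective (affineHom a b) := by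
  rintro (x | x) (y | y) h
  · exact congrArg r (ha (r.inj h))
  · cases h
  · cases h
  · exact congrArg sr (ha (add_right_cancel (sr.inj h)))

@[simp]
lemma r_mem_affineSubgroup {x : ZMod m} : r x ∈ affineSubgroup a b ↔ a ∣ x := by
  constructor
  · rintro ⟨y | y, h⟩
    · exact ⟨y, (r.inj h).symm⟩
    · cases h
  · rintro ⟨y, rfl⟩
    exact ⟨r y, rfl⟩

@[simp]
lemma sr_mem_affineSubgroup {x : ZMod m} : sr x ∈ affineSubgroup a b ↔ a ∣ x - b := by
  constructor
  · rintro ⟨y | y, h⟩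
    · cases h
    · exact ⟨y, by rw [← sr.inj h, add_sub_cancel_right]⟩
  · rintro ⟨y, hy⟩
    exact ⟨sr y, congrArg sr (by rw [← hy, sub_add_cancel])⟩

lemma affineSubgroup_eq_of_dvd {b' : ZMod m} (h : a ∣ b - b') :
    affineSubgroup a b = affineSubgroup a b' := by
  ext (x | x)
  · simp
  · simp only [sr_mem_affineSubgroup]
    rw [← dvd_add_left h, sub_add_sub_cancel]

lemma dvd_sub_of_affineSubgroup_eq {b' : ZMod m} (h : affineSubgroup a b = affineSubgroup a b') :
    a ∣ b - b' := by
  have : sr b ∈ affineSubgroup a b' := h ▸ sr_mem_affineSubgroup.mpr (by simp)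
  exact sr_mem_affineSubgroup.mp this

lemma toConjAct_r_smul_affineSubgroup (c : ZMod m) :
    ConjAct.toConjAct (r c) • affineSubgroup a b = affineSubgroup a (b - 2 * c) := by
  ext (x | x)
  · simp [Subgroup.mem_pointwise_smul_iff_inv_smul_mem, ConjAct.smul_def]
  · simp only [Subgroup.mem_pointwise_smul_iff_inv_smul_mem, ConjAct.smul_def,
      ConjAct.ofConjAct_inv, ConjAct.ofConjAct_toConjAct, inv_r, r_mul_sr, sr_mul_r,
      sub_neg_eq_add, neg_neg, sr_mem_affineSubgroup]
    rw [show x + c + c - b = x - (b - 2 * c) by ring]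

lemma toConjAct_sr_smul_affineSubgroup (c : ZMod m) :
    ConjAct.toConjAct (sr c) • affineSubgroup a b = affineSubgroup a (2 * c - b) := by
  ext (x | x)
  · simp [Subgroup.mem_pointwise_smul_iff_inv_smul_mem, ConjAct.smul_def]
  · simp only [Subgroup.mem_pointwise_smul_iff_inv_smul_mem, ConjAct.smul_def,
      ConjAct.ofConjAct_inv, ConjAct.ofConjAct_toConjAct, inv_sr, sr_mul_sr, r_mul_sr,
      sr_mem_affineSubgroup]
    rw [show c - (x - c) - b = -(x - (2 * c - b)) by ring, dvd_neg]

lemma exists_sr_mem_of_mulEquiv (hm1 : m ≠ 1) (hm2 : m ≠ 2) {H : Subgroup (DihedralGroup m)}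
    (e : H ≃* DihedralGroup m) : ∃ x, sr x ∈ H := by
  by_contra! hH
  have rot : ∀ g : H, ∃ x, (g : DihedralGroup m) = r x := by
    rintro ⟨x | x, hx⟩
    · exact ⟨x, rfl⟩
    · exact absurd hx (hH x)
  refine not_commutative hm1 hm2 ⟨⟨fun g h => e.symm.injective ?_⟩⟩
  obtain ⟨x, hx⟩ := rot (e.symm g)
  obtain ⟨y, hy⟩ := rot (e.symm h)
  simp only [map_mul]
  apply Subtype.ext
  rw [Subgroup.coe_mul, Subgroup.coe_mul, hx, hy, r_mul_r, r_mul_r, add_comm]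

end AffineSubgroup

lemma index_affineSubgroup (n : ℕ) (b : ZMod 0) :
    (affineSubgroup (n : ZMod 0) b).index = n := by
  let ρ := ZMod.castHom (dvd_zero n) (ZMod n)
  have hρ (x y : ZMod 0) : ρ x = ρ y ↔ (n : ZMod 0) ∣ y - x :=
    ZMod.intCast_eq_intCast_iff_dvd_sub x y n
  let f : DihedralGroup 0 → ZMod n
    | r x => ρ x
    | sr x => ρ (b - x)
  rw [Subgroup.index_eq_card_of_fibers f, Nat.card_zmod]
  · exact fun z => ⟨r _, (ZMod.ringHom_surjective ρ z).choose_spec⟩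
  rintro (x | x) (y | y) <;> simp only [f, hρ, inv_r, inv_sr, r_mul_r, r_mul_sr, sr_mul_r,
    sr_mul_sr, r_mem_affineSubgroup, sr_mem_affineSubgroup]
  · rw [neg_add_eq_sub]
  · rw [← dvd_neg, show -(b - y - x) = y - -x - b by ring]
  · rw [show y - (b - x) = x + y - b by ring]
  · rw [sub_sub_sub_cancel_left, dvd_sub_comm]

noncomputable def affineSubgroupEquiv {n : ℕ} (hn : n ≠ 0) (b : ZMod 0) :
    DihedralGroup 0 ≃* affineSubgroup (n : ZMod 0) b :=
  MonoidHom.ofInjective (affineHom_injective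
    (IsLeftCancelMulZero.mul_left_cancel_of_ne_zero (Nat.cast_ne_zero.mpr hn)))

lemma exists_affineSubgroup_eq_of_sr_mem {H : Subgroup (DihedralGroup 0)} {b : ZMod 0}
    (hb : sr b ∈ H) : ∃ n : ℕ, H = affineSubgroup (n : ZMod 0) b := by
  let rotations : AddSubgroup (ZMod 0) :=
    { carrier := {x | r x ∈ H}
      zero_mem' := H.one_mem
      add_mem' := fun {x y} hx hy => show r (x + y) ∈ H from r_mul_r x y ▸ H.mul_mem hx hy
      neg_mem' := fun {x} hx => show r (-x) ∈ H from inv_r x ▸ H.inv_mem hx }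
  obtain ⟨d, hd⟩ := Int.subgroup_cyclic rotations
  have hr (x : ZMod 0) : r x ∈ H ↔ (d.natAbs : ZMod 0) ∣ x := by
    change x ∈ rotations ↔ _
    rw [hd, ← AddSubgroup.zmultiples_eq_closure]
    exact Int.mem_zmultiples_iff.trans Int.natAbs_dvd.symm
  refine ⟨d.natAbs, ?_⟩
  ext (x | x)
  · rw [hr, r_mem_affineSubgroup]
  · rw [← H.mul_mem_cancel_right hb, sr_mul_sr, hr, sr_mem_affineSubgroup, dvd_sub_comm]

lemma mem_orbit_affineSubgroup_iff {n : ℕ} {b : ZMod 0} {H : Subgroup (DihedralGroup 0)} :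
    H ∈ MulAction.orbit (ConjAct (DihedralGroup 0)) (affineSubgroup (n : ZMod 0) b) ↔
      ∃ b', H = affineSubgroup (n : ZMod 0) b' ∧ ((n.gcd 2 : ℕ) : ZMod 0) ∣ b' - b := by
  have hg2 : ((n.gcd 2 : ℕ) : ZMod 0) ∣ 2 := by
    simpa using Nat.cast_dvd_cast (α := ZMod 0) (Nat.gcd_dvd_right n 2)
  constructor
  · rintro ⟨g, rfl⟩
    obtain ⟨c | c, rfl⟩ := ConjAct.toConjAct.surjective g
    · refine ⟨_, toConjAct_r_smul_affineSubgroup c, ?_⟩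
      rw [sub_sub_cancel_left, dvd_neg]
      exact hg2.mul_right c
    · refine ⟨_, toConjAct_sr_smul_affineSubgroup c, ?_⟩
      rw [show 2 * c - b - b = 2 * (c - b) by ring]
      exact hg2.mul_right _
  · rintro ⟨b', rfl, q, hq⟩
    set A : ZMod 0 := Int.cast (n.gcdA 2)
    set B : ZMod 0 := Int.cast (n.gcdB 2)
    have bezout : ((n.gcd 2 : ℕ) : ZMod 0) = n * A + 2 * B := by
      exact_mod_cast Nat.gcd_eq_gcd_ab n 2
    refine ⟨ConjAct.toConjAct (r (-(B * q))), ?_⟩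
    refine (toConjAct_r_smul_affineSubgroup _).trans (affineSubgroup_eq_of_dvd ⟨-(A * q), ?_⟩)
    linear_combination -hq - q * bezout

end DihedralGroup

def selfIsoConjClasses (G : Type*) [Group G] (k : ℕ) : Set (Set (Subgroup G)) :=
  {S | ∃ H : Subgroup G, Nonempty (H ≃* G) ∧ H.index ≠ 0 ∧ H.index ≤ k ∧
    S = MulAction.orbit (ConjAct G) H}

namespace MulEquiv

variable {G G' : Type*} [Group G] [Group G']

lemma mapSubgroup_toConjAct_smul (e : G ≃* G') (g : G) (H : Subgroup G) :
    e.mapSubgroup (ConjAct.toConjAct g • H) = ConjAct.toConjAct (e g) • e.mapSubgroup H := by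
  ext x
  simp only [coe_mapSubgroup, Subgroup.mem_map_equiv,
    Subgroup.mem_pointwise_smul_iff_inv_smul_mem, ConjAct.smul_def, ConjAct.ofConjAct_toConjAct,
    inv_inv, map_mul, map_inv, symm_apply_apply]

lemma image_mapSubgroup_orbit (e : G ≃* G') (H : Subgroup G) :
    e.mapSubgroup '' MulAction.orbit (ConjAct G) H =
      MulAction.orbit (ConjAct G') (e.mapSubgroup H) := by
  ext K
  constructor
  · rintro ⟨_, ⟨g, rfl⟩, rfl⟩
    obtain ⟨g, rfl⟩ := ConjAct.toConjAct.surjective g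
    exact ⟨ConjAct.toConjAct (e g), (e.mapSubgroup_toConjAct_smul g H).symm⟩
  · rintro ⟨g, rfl⟩
    obtain ⟨g, rfl⟩ := ConjAct.toConjAct.surjective g
    refine ⟨_, ⟨ConjAct.toConjAct (e.symm g), rfl⟩, ?_⟩
    simp only [mapSubgroup_toConjAct_smul, apply_symm_apply]

lemma image_mapSubgroup_mem_selfIsoConjClasses {e : G ≃* G'} {k : ℕ} {S : Set (Subgroup G)}
    (hS : S ∈ selfIsoConjClasses G k) : e.mapSubgroup '' S ∈ selfIsoConjClasses G' k := by
  obtain ⟨H, ⟨f⟩, h0, hk, rfl⟩ := hS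
  have hindex : (e.mapSubgroup H).index = H.index := H.index_map_equiv e
  exact ⟨e.mapSubgroup H, ⟨(e.subgroupMap H).symm.trans (f.trans e)⟩, hindex ▸ h0, hindex ▸ hk,
    e.image_mapSubgroup_orbit H⟩

lemma card_selfIsoConjClasses_congr (e : G ≃* G') (k : ℕ) :
    Nat.card (selfIsoConjClasses G' k) = Nat.card (selfIsoConjClasses G k) := by
  have : selfIsoConjClasses G' k = Set.image e.mapSubgroup '' selfIsoConjClasses G k := by
    refine subset_antisymm (fun S hS => ?_) ?_
    · exact ⟨_, image_mapSubgroup_mem_selfIsoConjClasses (e := e.symm) hS,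
        e.mapSubgroup.image_symm_image S⟩
    · rintro _ ⟨S, hS, rfl⟩
      exact image_mapSubgroup_mem_selfIsoConjClasses hS
  rw [this, Nat.card_image_of_injective (Set.image_injective.2 e.mapSubgroup.injective)]

end MulEquiv

lemma Nat.sum_Icc_gcd_two (k : ℕ) : ∑ n ∈ Finset.Icc 1 k, n.gcd 2 = 3 * k / 2 := by
  induction k with
  | zero => rfl
  | succ k ih =>
    rw [Finset.sum_Icc_succ_top (by omega), ih, Nat.gcd_comm, Nat.gcd_rec]
    rcases Nat.mod_two_eq_zero_or_one (k + 1) with h | h <;>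
      simp only [h, Nat.gcd_zero_left, Nat.gcd_one_left] <;> omega

lemma ZMod.natCast_dvd_intCast_zero_iff {n : ℕ} {y : ℤ} :
    (n : ZMod 0) ∣ (Int.cast y : ZMod 0) ↔ (n : ℤ) ∣ y := Iff.rfl

namespace DihedralGroup

noncomputable def affineSubgroupReps (k : ℕ) : Finset (Σ _ : ℕ, ℤ) :=
  (Finset.Icc 1 k).sigma fun n => Finset.Ico 0 (n.gcd 2 : ℤ)

lemma mem_affineSubgroupReps {k n : ℕ} {i : ℤ} :
    ⟨n, i⟩ ∈ affineSubgroupReps k ↔ 1 ≤ n ∧ n ≤ k ∧ 0 ≤ i ∧ i < n.gcd 2 := by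
  simp [affineSubgroupReps, and_assoc]

lemma card_affineSubgroupReps (k : ℕ) : (affineSubgroupReps k).card = 3 * k / 2 := by
  simp only [affineSubgroupReps, Finset.card_sigma, Int.card_Ico, sub_zero, Int.toNat_natCast]
  exact Nat.sum_Icc_gcd_two k

def orbitOfRep : (Σ _ : ℕ, ℤ) → Set (Subgroup (DihedralGroup 0))
  | ⟨n, i⟩ => MulAction.orbit (ConjAct (DihedralGroup 0)) (affineSubgroup (n : ZMod 0) (Int.cast i))

lemma selfIsoConjClasses_eq_image (k : ℕ) :
    selfIsoConjClasses (DihedralGroup 0) k = orbitOfRep '' affineSubgroupReps k := by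
  ext S
  constructor
  · rintro ⟨H, ⟨e⟩, h0, hk, rfl⟩
    obtain ⟨b, hb⟩ := exists_sr_mem_of_mulEquiv (by decide) (by decide) e
    obtain ⟨n, rfl⟩ := exists_affineSubgroup_eq_of_sr_mem hb
    obtain ⟨b, rfl⟩ := ZMod.intCast_surjective b
    rw [index_affineSubgroup] at h0 hk
    have hg : 0 < (n.gcd 2 : ℤ) := by exact_mod_cast Nat.gcd_pos_of_pos_right n two_pos
    refine ⟨⟨n, b % n.gcd 2⟩, mem_affineSubgroupReps.2 ⟨Nat.one_le_iff_ne_zero.2 h0, hk,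
      Int.emod_nonneg b hg.ne', Int.emod_lt_of_pos b hg⟩,
      MulAction.orbit_eq_iff.2 (mem_orbit_affineSubgroup_iff.2 ⟨_, rfl, ?_⟩)⟩
    rw [← Int.cast_sub, ZMod.natCast_dvd_intCast_zero_iff, Int.emod_def, sub_sub_cancel_left]
    exact (dvd_mul_right _ _).neg_right
  · rintro ⟨⟨n, i⟩, hp, rfl⟩
    obtain ⟨hn, hk, -⟩ := mem_affineSubgroupReps.1 hp
    have hindex := index_affineSubgroup n (Int.cast i)
    exact ⟨_, ⟨(affineSubgroupEquiv (by omega) _).symm⟩, by omega, by omega, rfl⟩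

lemma injOn_orbitOfRep (k : ℕ) : Set.InjOn orbitOfRep (affineSubgroupReps k) := by
  rintro ⟨n, i⟩ hp ⟨n', i'⟩ hp' h
  obtain ⟨-, -, hi⟩ := mem_affineSubgroupReps.1 hp
  obtain ⟨-, -, hi'⟩ := mem_affineSubgroupReps.1 hp'
  obtain ⟨b, hK, hb⟩ := mem_orbit_affineSubgroup_iff.1 (h ▸ MulAction.mem_orbit_self _ :
    affineSubgroup (n' : ZMod 0) (Int.cast i') ∈ orbitOfRep ⟨n, i⟩)
  obtain rfl : n' = n := by
    simpa only [index_affineSubgroup] using congrArg Subgroup.index hK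
  have hdvd : ((n'.gcd 2 : ℕ) : ZMod 0) ∣ Int.cast i' - Int.cast i :=
    sub_add_sub_cancel (Int.cast i' : ZMod 0) b (Int.cast i) ▸
      ((Nat.cast_dvd_cast (Nat.gcd_dvd_left n' 2)).trans (dvd_sub_of_affineSubgroup_eq hK)).add hb
  rw [← Int.cast_sub, ZMod.natCast_dvd_intCast_zero_iff] at hdvd
  have := Int.eq_zero_of_abs_lt_dvd hdvd (abs_sub_lt_iff.2 ⟨by omega, by omega⟩)
  rw [show i' = i by omega]

lemma card_selfIsoConjClasses (k : ℕ) :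
    Nat.card (selfIsoConjClasses (DihedralGroup 0) k) = 3 * k / 2 := by
  rw [selfIsoConjClasses_eq_image, Nat.card_image_of_injOn (injOn_orbitOfRep k),
    Nat.card_coe_set_eq, Set.ncard_coe_finset, card_affineSubgroupReps]

end DihedralGroup

theorem count_dihedral_subgroups_of_index_le_general (k : ℕ) :
    Nat.card {S : Set (Subgroup InfDihedral) //
        ∃ H : Subgroup InfDihedral,
          Nonempty (H ≃* InfDihedral) ∧ H.index ≠ 0 ∧ H.index ≤ k ∧
          S = MulAction.orbit (ConjAct InfDihedral) H} = 3 * k / 2 :=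
  (MulEquiv.card_selfIsoConjClasses_congr InfDihedral.mulEquivDihedralGroupZero.symm k).trans
    (DihedralGroup.card_selfIsoConjClasses k)

/-- For every positive integer `k`, the infinite dihedral group contains exactly `⌊3k/2⌋`
conjugacy classes of subgroups isomorphic to itself and of index at most `k`. -/
theorem count_dihedral_subgroups_of_index_le (k : ℕ) (hk : 0 < k) :
    Nat.card {S : Set (Subgroup InfDihedral) //
        ∃ H : Subgroup InfDihedral,
          Nonempty (H ≃* InfDihedral) ∧ H.index ≠ 0 ∧ H.index ≤ k ∧
          S = MulAction.orbit (ConjAct InfDihedral) H} = 3 * k / 2 :=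
  count_dihedral_subgroups_of_index_le_general k
end

section
/- A finitely generated group G has only finitely many conjugacy classes of involutions, provided G is virtually free (e.g., a finitely generated Fuchsian group); in particular, the quotient of the set of involutions by the conjugation action is finite. -/
/-!
Passing to a normal core, `G` has a normal subgroup `N` of finite index that is free of finite
rank, so it suffices to treat the involutions in one coset `g₀ N`. With `σ` the conjugation by
`g₀` on `N`, the element `g₀ * a` is an involution iff `σ a * a = 1`, and conjugating it by
`σ z` gives `g₀ * (z⁻¹ * a * σ z)`. In the Cayley tree of `N`, the map `u ↦ a * σ u` is a
Lipschitz involution, and any such map moves some vertex `u` by a bounded amount. Hence every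
involution of `g₀ N` is conjugate to `g₀ * s` with `s` in a fixed ball of `N`.
-/

universe u

theorem Nat.exists_lt_and_not_succ {P : ℕ → Prop} {n : ℕ} (h0 : P 0) (hn : ¬ P n) :
    ∃ j < n, P j ∧ ¬ P (j + 1) := by
  induction n with
  | zero => exact absurd h0 hn
  | succ n ih =>
    by_cases h : P n
    · exact ⟨n, n.lt_succ_self, h, hn⟩
    · obtain ⟨j, hj, hPj⟩ := ih h
      exact ⟨j, by omega, hPj⟩

theorem Nat.exists_le_and_le_add_of_le {f : ℕ → ℕ} {L n : ℕ} (hn : f n ≤ n)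
    (hstep : ∀ k, f k ≤ f (k + 1) + L) : ∃ k ≤ n, f k ≤ k ∧ k ≤ f k + L := by
  classical
  have hex : ∃ k, f k ≤ k := ⟨n, hn⟩
  refine ⟨Nat.find hex, Nat.find_min' hex hn, Nat.find_spec hex, ?_⟩
  rcases Nat.eq_zero_or_pos (Nat.find hex) with h | h
  · omega
  · have hprev := Nat.find_min hex (Nat.sub_lt h one_pos)
    have := hstep (Nat.find hex - 1)
    rw [Nat.sub_add_cancel h] at this
    omega

namespace FreeGroup

variable {α : Type*} [DecidableEq α]

theorem IsReduced.exists_reduce_append {L₁ L₂ : List (α × Bool)} (h₁ : IsReduced L₁)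
    (h₂ : IsReduced L₂) :
    ∃ A w B, L₁ = A ++ w ∧ L₂ = invRev w ++ B ∧ reduce (L₁ ++ L₂) = A ++ B := by
  induction L₁ using List.reverseRecOn generalizing L₂ with
  | nil => exact ⟨[], [], L₂, by simp, by simp [invRev], by simpa using h₂.reduce_eq⟩
  | append_singleton M x ih =>
    rcases L₂ with _ | ⟨y, T⟩
    · exact ⟨M ++ [x], [], [], by simp, by simp [invRev], by simpa using h₁.reduce_eq⟩
    by_cases hxy : x.1 = y.1 → x.2 = y.2
    · refine ⟨M ++ [x], [], y :: T, by simp, by simp [invRev], IsReduced.reduce_eq ?_⟩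
      simpa using
        h₁.append_overlap (L₃ := y :: T) (isReduced_cons_cons.mpr ⟨hxy, h₂⟩) (by simp)
    · have hy : y = (x.1, !x.2) := by
        obtain ⟨hx, hb⟩ := Classical.not_imp.mp hxy
        exact Prod.ext hx.symm (by cases hx2 : x.2 <;> cases hy2 : y.2 <;> simp_all)
      obtain ⟨A, w, B, rfl, hT, hred⟩ :=
        ih (h₁.infix (List.prefix_append M [x]).isInfix)
          (h₂.infix (List.suffix_cons y T).isInfix)
      refine ⟨A, w ++ [x], B, by simp, by simp [hy, hT, invRev], ?_⟩
      rw [← hred]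
      apply reduce.Step.eq
      simpa [hy] using Red.Step.not (L₁ := A ++ w) (L₂ := T) (x := x.1) (b := x.2)

theorem exists_toWord_mul (x y : FreeGroup α) :
    ∃ A w B, x.toWord = A ++ w ∧ y.toWord = invRev w ++ B ∧ (x * y).toWord = A ++ B := by
  rw [toWord_mul]
  exact isReduced_toWord.exists_reduce_append isReduced_toWord

theorem norm_inv_mul_comm (x y : FreeGroup α) : (x⁻¹ * y).norm = (y⁻¹ * x).norm := by
  rw [← norm_inv_eq, mul_inv_rev, inv_inv]

theorem norm_inv_mul_le (x y z : FreeGroup α) :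
    (x⁻¹ * z).norm ≤ (x⁻¹ * y).norm + (y⁻¹ * z).norm := by
  simpa [mul_assoc] using norm_mul_le (x⁻¹ * y) (y⁻¹ * z)

theorem norm_le_norm_add_norm_inv_mul (x y : FreeGroup α) :
    y.norm ≤ x.norm + (x⁻¹ * y).norm := by
  simpa using norm_inv_mul_le 1 x y

theorem toWord_mk_of_isReduced {L : List (α × Bool)} (h : IsReduced L) : (mk L).toWord = L := by
  rw [toWord_mk, h.reduce_eq]

theorem norm_inv_mk_mul_add_length {p : List (α × Bool)} {x : FreeGroup α}
    (h : p <+: x.toWord) : ((mk p)⁻¹ * x).norm + p.length = x.norm := by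
  obtain ⟨s, hs⟩ := h
  have hx : (mk p)⁻¹ * x = mk s := by
    rw [inv_mul_eq_iff_eq_mul, mul_mk, hs, mk_toWord]
  have hsred : IsReduced s := isReduced_toWord.infix (hs ▸ List.suffix_append p s).isInfix
  rw [hx, norm, toWord_mk_of_isReduced hsred, norm, ← hs, List.length_append, add_comm]

theorem norm_add_one_le_of_not_prefix {x v : FreeGroup α} {k : ℕ}
    (h : ¬ x.toWord.take k <+: v.toWord) : x.norm + 1 ≤ (x⁻¹ * v).norm + k := by
  obtain ⟨A, w, B, hx, hv, hxv⟩ := exists_toWord_mul x⁻¹ v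
  have hx' : x.toWord = invRev w ++ invRev A := by
    rw [← invRev_invRev (L₁ := x.toWord), ← toWord_inv, hx]
    simp [invRev]
  have hwk : w.length < k := by
    by_contra! hkw
    apply h
    rw [hx', hv, List.take_append_of_le_length (by simpa using hkw)]
    exact (List.take_prefix _ _).trans (List.prefix_append _ _)
  simp only [norm, hx', hxv, List.length_append, invRev_length]
  omega

theorem toWord_mk_take (x : FreeGroup α) (k : ℕ) :
    (mk (x.toWord.take k)).toWord = x.toWord.take k :=
  toWord_mk_of_isReduced (isReduced_toWord.infix (List.take_prefix k _).isInfix)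

theorem norm_mk_take (x : FreeGroup α) {k : ℕ} (hk : k ≤ x.norm) :
    (mk (x.toWord.take k)).norm = k := by
  rw [norm, toWord_mk_take, List.length_take]
  exact min_eq_left hk

theorem norm_inv_mk_take_mul_mk_take_le (x : FreeGroup α) {i j : ℕ} (hij : i ≤ j) :
    ((mk (x.toWord.take i))⁻¹ * mk (x.toWord.take j)).norm ≤ j - i := by
  have hpre : x.toWord.take i <+: (mk (x.toWord.take j)).toWord := by
    rw [toWord_mk_take]
    exact List.prefix_take_iff.mpr ⟨List.take_prefix _ _, (List.length_take_le i _).trans hij⟩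
  have := norm_inv_mk_mul_add_length hpre
  simp only [norm, toWord_mk_take, List.length_take] at this ⊢
  omega

theorem exists_norm_map_le [Finite α] {β : Type*} [DecidableEq β]
    (f : FreeGroup α →* FreeGroup β) : ∃ L, ∀ x, (f x).norm ≤ L * x.norm := by
  obtain ⟨L, hL⟩ := (Set.finite_range fun a => (f (of a)).norm).bddAbove
  have hletter : ∀ p : α × Bool, (f (mk [p])).norm ≤ L := by
    rintro ⟨a, _ | _⟩
    · simpa [show mk [(a, false)] = (of a)⁻¹ from rfl] using hL ⟨a, rfl⟩
    · exact hL ⟨a, rfl⟩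
  have hword : ∀ l : List (α × Bool), (f (mk l)).norm ≤ L * l.length := by
    intro l
    induction l with
    | nil => simp [← one_eq_mk]
    | cons p l ih =>
      calc (f (mk (p :: l))).norm = (f (mk [p]) * f (mk l)).norm := by
            rw [← _root_.map_mul, mul_mk]; rfl
      _ ≤ L + L * l.length := (norm_mul_le _ _).trans (add_le_add (hletter p) ih)
      _ = L * (p :: l).length := by rw [List.length_cons]; ring
  exact ⟨L, fun x => by simpa only [mk_toWord, norm] using hword x.toWord⟩

theorem finite_setOf_norm_le [Finite α] (C : ℕ) : {x : FreeGroup α | x.norm ≤ C}.Finite :=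
  ((List.finite_length_le (α × Bool) C).preimage toWord_injective.injOn).subset fun _ hx => hx

-- Some step `z j → z (j + 1)` leaves the subtree of words beginning with the length-`k` prefix
-- of `x`, and a jump of length at most `L` out of that subtree starts within `L` of its root.
theorem exists_norm_inv_mul_mk_take_le {x : FreeGroup α} {z : ℕ → FreeGroup α} {n L : ℕ}
    (h0 : z 0 = x) (hn : z n = 1) (hstep : ∀ j, ((z j)⁻¹ * z (j + 1)).norm ≤ L)
    {k : ℕ} (hk : k ≤ x.norm) :
    ∃ j ≤ n, ((z j)⁻¹ * mk (x.toWord.take k)).norm ≤ L := by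
  rcases Nat.eq_zero_or_pos k with rfl | hk0
  · exact ⟨n, le_rfl, by simp [hn, ← one_eq_mk]⟩
  have hlen : (x.toWord.take k).length = k := by
    rw [List.length_take]
    exact min_eq_left hk
  obtain ⟨j, hjn, hj, hj1⟩ :=
    Nat.exists_lt_and_not_succ (P := fun j => x.toWord.take k <+: (z j).toWord)
      (by rw [h0]; exact List.take_prefix _ _)
      (fun h => by
        have := (show x.toWord.take k <+: (z n).toWord from h).length_le
        simp [hn, hlen] at this
        omega)
  have htake : (z j).toWord.take k = x.toWord.take k := by
    rw [List.prefix_iff_eq_take.mp hj, hlen]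
  have hsep :=
    norm_add_one_le_of_not_prefix (x := z j) (v := z (j + 1)) (k := k) (by rwa [htake])
  have hcancel := norm_inv_mk_mul_add_length hj
  refine ⟨j, hjn.le, ?_⟩
  have := hstep j
  rw [norm_inv_mul_comm]
  omega

-- `φ` carries the geodesic `γ` from `1` to `φ 1` to a coarse path `z` from `φ 1` back to `1`.
-- At a time `k` with `|z k| ≈ k`, that path is near some `γ j` with `j ≈ k`, so `γ k` is
-- almost fixed.
theorem exists_norm_inv_mul_le_of_involutive {φ : FreeGroup α → FreeGroup α}
    (hφ : Function.Involutive φ) {L : ℕ}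
    (hL : ∀ u v, ((φ u)⁻¹ * φ v).norm ≤ L * (u⁻¹ * v).norm) :
    ∃ u, (u⁻¹ * φ u).norm ≤ 2 * L ^ 2 + L := by
  set x := φ 1
  set γ : ℕ → FreeGroup α := fun k => mk (x.toWord.take k)
  set z : ℕ → FreeGroup α := fun k => φ (γ k)
  have hγ0 : γ 0 = 1 := by simp [γ, ← one_eq_mk]
  have hγn : γ x.norm = x := by simp [γ, norm, mk_toWord]
  have hz0 : z 0 = x := by simp [z, hγ0, x]
  have hzn : z x.norm = 1 := by simp [z, hγn, x, hφ 1]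
  have hγdist : ∀ {i j}, i ≤ j → ((γ i)⁻¹ * γ j).norm ≤ j - i :=
    norm_inv_mk_take_mul_mk_take_le x
  have hzstep : ∀ j, ((z j)⁻¹ * z (j + 1)).norm ≤ L := fun j =>
    (hL _ _).trans (by simpa using Nat.mul_le_mul_left L (hγdist j.le_succ))
  obtain ⟨k, hkn, hzk, hkz⟩ : ∃ k ≤ x.norm, (z k).norm ≤ k ∧ k ≤ (z k).norm + L :=
    Nat.exists_le_and_le_add_of_le (f := fun k => (z k).norm) (by simp [hzn])
      (fun k => (norm_le_norm_add_norm_inv_mul (z (k + 1)) (z k)).trans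
        (by rw [norm_inv_mul_comm]; linarith [hzstep k]))
  obtain ⟨j, hjn, hj⟩ := exists_norm_inv_mul_mk_take_le hz0 hzn hzstep hkn
  have hjk : ((γ j)⁻¹ * z k).norm ≤ L * L := by
    have := hL (z j) (γ k)
    rw [hφ] at this
    exact this.trans (Nat.mul_le_mul_left L hj)
  have h1 := norm_le_norm_add_norm_inv_mul (γ j) (z k)
  have h2 := norm_le_norm_add_norm_inv_mul (z k) (γ j)
  rw [norm_inv_mul_comm] at h2
  rw [norm_mk_take x hjn] at h1 h2
  have hkj : ((γ k)⁻¹ * γ j).norm ≤ L * L + L := by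
    rcases le_total k j with h | h
    · have := hγdist h
      omega
    · have := hγdist h
      rw [norm_inv_mul_comm]
      omega
  exact ⟨γ k, (norm_inv_mul_le _ (γ j) _).trans (by nlinarith)⟩

-- `u ↦ b * A u` is an involution, and it is Lipschitz for the word metric.
theorem exists_finite_twisted_conj [Finite α] (A : FreeGroup α →* FreeGroup α)
    (hA : Function.Involutive A) :
    ∃ S : Set (FreeGroup α), S.Finite ∧
      ∀ b, A b * b = 1 → ∃ z, z⁻¹ * b * A z ∈ S := by
  obtain ⟨L, hL⟩ := exists_norm_map_le A
  refine ⟨{x | x.norm ≤ 2 * L ^ 2 + L}, finite_setOf_norm_le _, fun b hb => ?_⟩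
  have hAb : A b = b⁻¹ := eq_inv_of_mul_eq_one_left hb
  obtain ⟨u, hu⟩ := exists_norm_inv_mul_le_of_involutive (φ := fun u => b * A u)
    (fun u => by simp [hAb, hA u]) (fun u v => by simpa [mul_assoc] using hL (u⁻¹ * v))
  exact ⟨u, by simpa [mul_assoc] using hu⟩

theorem finite_of_fg {κ : Type*} [Group.FG (FreeGroup κ)] : Finite κ := by
  have : Group.FG (Abelianization (FreeGroup κ)) :=
    Group.fg_of_surjective (f := Abelianization.of) QuotientGroup.mk_surjective
  have : Module.Finite ℤ (FreeAbelianGroup κ) :=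
    Module.Finite.iff_addGroup_fg.mpr
      (AddGroup.fg_of_group_fg (G := Abelianization (FreeGroup κ)))
  exact Module.Finite.finite_basis (FreeAbelianGroup.basis κ)

end FreeGroup

theorem MulEquiv.exists_finite_twisted_conj {N : Type*} [Group N] {κ : Type*} [Finite κ]
    (e : N ≃* FreeGroup κ) (σ : N →* N) (hσ : Function.Involutive σ) :
    ∃ S : Set N, S.Finite ∧ ∀ a, σ a * a = 1 → ∃ z, z⁻¹ * a * σ z ∈ S := by
  classical
  let A : FreeGroup κ →* FreeGroup κ := e.toMonoidHom.comp (σ.comp e.symm.toMonoidHom)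
  have hA : Function.Involutive A := fun b => by simp [A, hσ _]
  obtain ⟨S, hSfin, hS⟩ := FreeGroup.exists_finite_twisted_conj A hA
  refine ⟨e.symm '' S, hSfin.image _, fun a ha => ?_⟩
  obtain ⟨z, hz⟩ := hS (e a) (by simpa [A] using congrArg e ha)
  exact ⟨e.symm z, z⁻¹ * e a * A z, hz, by simp [A]⟩

theorem exists_normal_finiteIndex_mulEquiv_freeGroup {G : Type u} [Group G] [Group.FG G]
    {H : Subgroup G} [H.FiniteIndex] {ι : Type*} (e : H ≃* FreeGroup ι) :
    ∃ N : Subgroup G, N.Normal ∧ N.FiniteIndex ∧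
      ∃ κ : Type u, Finite κ ∧ Nonempty (N ≃* FreeGroup κ) := by
  have : IsFreeGroup H := IsFreeGroup.ofMulEquiv e.symm
  have : IsFreeGroup H.normalCore :=
    IsFreeGroup.ofMulEquiv (Subgroup.subgroupOfEquivOfLe H.normalCore_le)
  have : Group.FG (FreeGroup (IsFreeGroup.Generators H.normalCore)) :=
    Group.fg_of_surjective (f := (IsFreeGroup.toFreeGroup H.normalCore).toMonoidHom)
      (IsFreeGroup.toFreeGroup H.normalCore).surjective
  exact ⟨H.normalCore, H.normalCore_normal, inferInstance, _, FreeGroup.finite_of_fg,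
    ⟨IsFreeGroup.toFreeGroup _⟩⟩

theorem finite_conjClasses_involutions_of_mk_eq {G : Type*} [Group G] {N : Subgroup G}
    [N.Normal] {κ : Type*} [Finite κ] (e : N ≃* FreeGroup κ) (q : G ⧸ N) :
    (ConjClasses.mk '' {g : G | orderOf g = 2 ∧ (g : G ⧸ N) = q}).Finite := by
  rcases Set.eq_empty_or_nonempty {g : G | orderOf g = 2 ∧ (g : G ⧸ N) = q} with
    h | ⟨g₀, ⟨hg₀, rfl⟩⟩
  · simp [h]
  have hg₀sq : g₀ * g₀ = 1 := by rw [← pow_two, ← hg₀, pow_orderOf_eq_one]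
  let σ : N →* N := (MulAut.conjNormal g₀ : N ≃* N).toMonoidHom
  have hσ : Function.Involutive σ := fun a => by
    simp [σ, ← MulAut.mul_apply, ← map_mul, hg₀sq]
  obtain ⟨S, hSfin, hS⟩ := e.exists_finite_twisted_conj σ hσ
  refine (hSfin.image fun s : N => ConjClasses.mk (g₀ * s)).subset ?_
  rintro _ ⟨g, ⟨hg, hgq⟩, rfl⟩
  let a : N := ⟨g₀⁻¹ * g, QuotientGroup.eq.mp hgq.symm⟩
  have ha : σ a * a = 1 := by
    ext
    simp only [σ, a, MulEquiv.coe_toMonoidHom, MulAut.conjNormal_apply, Subgroup.coe_mul,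
      Subgroup.coe_one]
    calc g₀ * (g₀⁻¹ * g) * g₀⁻¹ * (g₀⁻¹ * g)
        = g * (g₀ * g₀)⁻¹ * g := by group
    _ = 1 := by rw [hg₀sq, inv_one, mul_one, ← pow_two, ← hg, pow_orderOf_eq_one]
  obtain ⟨z, hz⟩ := hS a ha
  refine ⟨_, hz, ConjClasses.mk_eq_mk_iff_isConj.mpr (isConj_iff.mpr ⟨σ z, ?_⟩)⟩
  simp only [σ, a, MulEquiv.coe_toMonoidHom, MulAut.conjNormal_apply, Subgroup.coe_mul,
    Subgroup.coe_inv]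
  group

/-- A finitely generated virtually free group (for instance a finitely generated
Fuchsian group) has only finitely many conjugacy classes of involutions. -/
theorem finitely_many_conj_classes_of_involutions {G : Type*} [Group G]
    (hfg : Group.FG G)
    (hvf : ∃ H : Subgroup G, H.index ≠ 0 ∧ ∃ ι : Type, Nonempty (H ≃* FreeGroup ι)) :
    Set.Finite (ConjClasses.mk '' {g : G | orderOf g = 2}) := by
  obtain ⟨H, hH, ι, ⟨e⟩⟩ := hvf
  have : H.FiniteIndex := ⟨hH⟩
  obtain ⟨N, hN, hNindex, κ, hκ, ⟨eN⟩⟩ := exists_normal_finiteIndex_mulEquiv_freeGroup e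
  have : Finite (G ⧸ N) := N.finite_quotient_of_finiteIndex
  have hcover : {g : G | orderOf g = 2} =
      ⋃ q : G ⧸ N, {g : G | orderOf g = 2 ∧ (g : G ⧸ N) = q} := by
    ext g
    simp
  rw [hcover, Set.image_iUnion]
  exact Set.finite_iUnion (finite_conjClasses_involutions_of_mk_eq eN)
end
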